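/- Let 0<s<1 and 0<r<1+2s. Define G:[0,1/2]→ℝ by G(0) := 0 and G(x) := x^{r-2s} ∫_{1/(2x)}^{+∞} ((t+1)^r - (t-1)^r) t^{-1-2s} dt for 0 < x ≤ 1/2. Then G is continuously differentiable on [0,1/2] (with one-sided derivatives at the endpoints); in particular, the one-sided derivative G'(0⁺) := lim_{x→0⁺} G'(x) exists and is finite. -/

import Mathlib

open MeasureTheory Filter Set

/-!
The substitution `t = v / x` turns `G x` into `∫_{v > 1/2} ((v + x)^r - (v - x)^r) v^(-1-2s) dv`,
a formula that also gives `G 0 = 0`. Differentiating the integrand in `x` and exchanging the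
integrals (Fubini) gives `G x = ∫_0^x H` with
`H u = ∫_{v > 1/2} r ((v + u)^(r-1) + (v - u)^(r-1)) v^(-1-2s) dv`.
For `0 ≤ u ≤ 1/2 < v` both `v ± u` lie in `[v - 1/2, 2v]`, so the integrand of `H` is dominated
by `(v - 1/2)^(r-1) v^(-1-2s) + v^(r-2-2s)` up to constants; this is integrable because `r > 0`
(at `v = 1/2`) and `r < 1 + 2s` (at infinity). Hence `H` is continuous on `[0, 1/2]` and `G` is
`C^1` there with `G' = H`.
-/

theorem rpow_le_rpow_add_rpow {x y z : ℝ} (p : ℝ) (hx : 0 < x) (hxy : x ≤ y) (hyz : y ≤ z) :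
    y ^ p ≤ x ^ p + z ^ p := by
  rcases le_total 0 p with hp | hp
  · linarith [Real.rpow_le_rpow (hx.le.trans hxy) hyz hp, Real.rpow_nonneg hx.le p]
  · linarith [Real.rpow_le_rpow_of_nonpos hx hxy hp,
      Real.rpow_nonneg (hx.le.trans (hxy.trans hyz)) p]

theorem integrableOn_Ioi_sub_rpow_div_rpow {a p q : ℝ} (ha : 0 < a) (hp : -1 < p)
    (hpq : p - q < -1) : IntegrableOn (fun v : ℝ => (v - a) ^ p / v ^ q) (Ioi a) := by
  have hcont : ContinuousOn (fun v : ℝ => (v - a) ^ p / v ^ q) (Ioi a) := by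
    intro v (hv : a < v)
    apply ContinuousAt.continuousWithinAt
    fun_prop (disch := first
      | (left; exact ne_of_gt (by linarith))
      | exact (Real.rpow_pos_of_pos (by linarith) _).ne')
  have near : IntegrableOn (fun v : ℝ => (v - a) ^ p / v ^ q) (Ioc a (2 * a)) := by
    have hsing : IntegrableOn (fun v : ℝ => (v - a) ^ p) (Icc a (2 * a)) := by
      rw [integrableOn_Icc_iff_integrableOn_Ioc,
        ← intervalIntegrable_iff_integrableOn_Ioc_of_le (by linarith)]
      simpa [two_mul] using
        (intervalIntegral.intervalIntegrable_rpow' hp (a := 0) (b := a)).comp_sub_right a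
    have hinv : ContinuousOn (fun v : ℝ => (v ^ q)⁻¹) (Icc a (2 * a)) := by
      intro v ⟨hv, _⟩
      apply ContinuousAt.continuousWithinAt
      fun_prop (disch := first
        | (left; exact ne_of_gt (by linarith))
        | exact (Real.rpow_pos_of_pos (by linarith) _).ne')
    simpa only [div_eq_mul_inv] using
      (hsing.mul_continuousOn hinv isCompact_Icc).mono_set Ioc_subset_Icc_self
  have far : IntegrableOn (fun v : ℝ => (v - a) ^ p / v ^ q) (Ioi (2 * a)) := by
    refine ((integrableOn_Ioi_rpow_of_lt hpq (by positivity)).const_mul ((1 / 2) ^ p + 1)).mono'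
      ((hcont.mono (Ioi_subset_Ioi (by linarith))).aestronglyMeasurable measurableSet_Ioi) ?_
    filter_upwards [ae_restrict_mem measurableSet_Ioi] with v (hv : 2 * a < v)
    have hv0 : 0 < v := by linarith
    have hnum : (v - a) ^ p ≤ ((1 / 2) ^ p + 1) * v ^ p := by
      calc (v - a) ^ p ≤ (v * (1 / 2)) ^ p + v ^ p :=
            rpow_le_rpow_add_rpow p (by linarith) (by linarith) (by linarith)
        _ = ((1 / 2) ^ p + 1) * v ^ p := by rw [Real.mul_rpow hv0.le (by norm_num)]; ring
    rw [Real.norm_of_nonneg (div_nonneg (Real.rpow_nonneg (by linarith) _)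
      (Real.rpow_nonneg hv0.le _)), Real.rpow_sub hv0, ← mul_div_assoc]
    exact div_le_div_of_nonneg_right hnum (Real.rpow_nonneg hv0.le _)
  rw [← Ioc_union_Ioi_eq_Ioi (by linarith : a ≤ 2 * a)]
  exact near.union far

noncomputable def kernel (r q x v : ℝ) : ℝ :=
  ((v + x) ^ r - (v - x) ^ r) / v ^ q

noncomputable def kernelDeriv (r q u v : ℝ) : ℝ :=
  r * ((v + u) ^ (r - 1) + (v - u) ^ (r - 1)) / v ^ q

noncomputable def kernelDerivBound (a r q v : ℝ) : ℝ :=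
  2 * r * ((v - a) ^ (r - 1) / v ^ q + 2 ^ (r - 1) * v ^ (r - 1 - q))

section
variable {a r q : ℝ}

theorem rpow_mul_integral_Ioi_div_eq_integral_kernel {x : ℝ} (hx : 0 < x) (hxa : x ≤ a) :
    x ^ (r + 1 - q) * ∫ t in Ioi (a / x), ((t + 1) ^ r - (t - 1) ^ r) / t ^ q =
      ∫ v in Ioi a, kernel r q x v := by
  set g : ℝ → ℝ := fun t => ((t + 1) ^ r - (t - 1) ^ r) / t ^ q
  have hscale : ∀ v ∈ Ioi a, g (x⁻¹ * v) = x ^ (q - r) * kernel r q x v := by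
    intro v (hv : a < v)
    have h₁ : x⁻¹ * v + 1 = (v + x) / x := by field_simp
    have h₂ : x⁻¹ * v - 1 = (v - x) / x := by field_simp
    have h₃ : x⁻¹ * v = v / x := by field_simp
    simp only [g, kernel]
    rw [h₁, h₂, h₃, Real.div_rpow (by linarith) hx.le, Real.div_rpow (by linarith) hx.le,
      Real.div_rpow (by linarith) hx.le, Real.rpow_sub hx]
    have := Real.rpow_pos_of_pos hx r
    have := Real.rpow_pos_of_pos hx q
    have := Real.rpow_pos_of_pos (by linarith : 0 < v) q
    field_simp
  have hsubst := integral_comp_mul_left_Ioi g a (inv_pos.2 hx)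
  rw [inv_inv, ← div_eq_inv_mul, setIntegral_congr_fun measurableSet_Ioi hscale,
    integral_const_mul, smul_eq_mul] at hsubst
  rw [← mul_right_inj' (Real.rpow_pos_of_pos hx (q - r)).ne', hsubst, ← mul_assoc,
    ← Real.rpow_add hx, show q - r + (r + 1 - q) = 1 by ring, Real.rpow_one]

theorem continuousOn_kernelDeriv (ha : 0 ≤ a) :
    ContinuousOn (fun p : ℝ × ℝ => kernelDeriv r q p.1 p.2) (Icc 0 a ×ˢ Ioi a) := by
  rintro ⟨u, v⟩ ⟨⟨hu0, hua⟩, (hv : a < v)⟩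
  apply ContinuousAt.continuousWithinAt
  unfold kernelDeriv
  fun_prop (disch := first
    | (left; exact ne_of_gt (by simp only; linarith))
    | exact (Real.rpow_pos_of_pos (by linarith) _).ne')

theorem continuousOn_kernelDeriv_left (ha : 0 ≤ a) {v : ℝ} (hv : a < v) :
    ContinuousOn (kernelDeriv r q · v) (Icc 0 a) := by
  have := (continuousOn_kernelDeriv (r := r) (q := q) ha).comp
    (continuous_id.prodMk continuous_const).continuousOn
    fun u hu => (⟨hu, hv⟩ : (u, v) ∈ Icc 0 a ×ˢ Ioi a)
  exact this

theorem continuousOn_kernelDeriv_right (ha : 0 ≤ a) {u : ℝ} (hu : u ∈ Icc 0 a) :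
    ContinuousOn (kernelDeriv r q u) (Ioi a) := by
  have := (continuousOn_kernelDeriv (r := r) (q := q) ha).comp
    (continuous_const.prodMk continuous_id).continuousOn
    fun v hv => (⟨hu, hv⟩ : (u, v) ∈ Icc 0 a ×ˢ Ioi a)
  exact this

theorem norm_kernelDeriv_le (hr : 0 ≤ r) {u v : ℝ} (hu : u ∈ Icc 0 a) (hv : a < v) :
    ‖kernelDeriv r q u v‖ ≤ kernelDerivBound a r q v := by
  obtain ⟨hu0, hua⟩ := hu
  have hv0 : 0 < v := by linarith
  have h₁ : (v + u) ^ (r - 1) ≤ (v - a) ^ (r - 1) + (2 * v) ^ (r - 1) :=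
    rpow_le_rpow_add_rpow _ (by linarith) (by linarith) (by linarith)
  have h₂ : (v - u) ^ (r - 1) ≤ (v - a) ^ (r - 1) + (2 * v) ^ (r - 1) :=
    rpow_le_rpow_add_rpow _ (by linarith) (by linarith) (by linarith)
  have hnonneg : 0 ≤ kernelDeriv r q u v := by
    unfold kernelDeriv
    have := Real.rpow_nonneg (by linarith : 0 ≤ v + u) (r - 1)
    have := Real.rpow_nonneg (by linarith : 0 ≤ v - u) (r - 1)
    positivity
  rw [Real.norm_of_nonneg hnonneg, kernelDerivBound, Real.rpow_sub hv0, kernelDeriv]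
  calc r * ((v + u) ^ (r - 1) + (v - u) ^ (r - 1)) / v ^ q
      ≤ r * (2 * ((v - a) ^ (r - 1) + (2 * v) ^ (r - 1))) / v ^ q := by gcongr; linarith
    _ = _ := by rw [Real.mul_rpow zero_le_two hv0.le]; ring

theorem integrableOn_kernelDerivBound (ha : 0 < a) (hr : 0 < r) (hrq : r < q) :
    IntegrableOn (kernelDerivBound a r q) (Ioi a) :=
  ((integrableOn_Ioi_sub_rpow_div_rpow ha (by linarith) (by linarith)).add
    ((integrableOn_Ioi_rpow_of_lt (by linarith) ha).const_mul _)).const_mul _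

theorem continuousOn_integral_kernelDeriv (ha : 0 < a) (hr : 0 < r) (hrq : r < q) :
    ContinuousOn (fun u => ∫ v in Ioi a, kernelDeriv r q u v) (Icc 0 a) := by
  refine continuousOn_of_dominated
    (fun u hu => (continuousOn_kernelDeriv_right ha.le hu).aestronglyMeasurable measurableSet_Ioi)
    (fun u hu => ?_) (integrableOn_kernelDerivBound ha hr hrq) ?_
  · filter_upwards [ae_restrict_mem measurableSet_Ioi] with v hv
    exact norm_kernelDeriv_le hr.le hu hv
  · filter_upwards [ae_restrict_mem measurableSet_Ioi] with v hv
    exact continuousOn_kernelDeriv_left ha.le hv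

theorem kernel_eq_integral_kernelDeriv {x v : ℝ} (hx : 0 ≤ x) (hxv : x < v) :
    kernel r q x v = ∫ u in 0..x, kernelDeriv r q u v := by
  have hderiv : ∀ u ∈ uIcc 0 x,
      HasDerivAt (kernel r q · v) (kernelDeriv r q u v) u := by
    intro u hu
    rw [uIcc_of_le hx] at hu
    have h₁ := ((hasDerivAt_id' u).const_add v).rpow_const (p := r) (Or.inl (by linarith [hu.1]))
    have h₂ := ((hasDerivAt_id' u).const_sub v).rpow_const (p := r) (Or.inl (by linarith [hu.2]))
    exact ((h₁.sub h₂).div_const (v ^ q)).congr_deriv (by rw [kernelDeriv]; ring)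
  rw [intervalIntegral.integral_eq_sub_of_hasDerivAt hderiv
    ((continuousOn_kernelDeriv_left hx hxv).intervalIntegrable_of_Icc hx)]
  simp [kernel]

theorem integral_kernel_eq_integral_integral_kernelDeriv (ha : 0 < a) (hr : 0 < r)
    (hrq : r < q) {x : ℝ} (hx : 0 ≤ x) (hxa : x ≤ a) :
    ∫ v in Ioi a, kernel r q x v =
      ∫ u in 0..x, ∫ v in Ioi a, kernelDeriv r q u v := by
  have hsub : Ioc 0 x ⊆ Icc 0 a := Ioc_subset_Icc_self.trans (Icc_subset_Icc_right hxa)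
  have hint : Integrable (Function.uncurry (kernelDeriv r q))
      ((volume.restrict (Ioc 0 x)).prod (volume.restrict (Ioi a))) := by
    refine (((integrableOn_const (C := (1 : ℝ)) measure_Ioc_lt_top.ne).mul_prod
      (integrableOn_kernelDerivBound ha hr hrq))).mono' ?_ ?_
    · rw [Measure.prod_restrict]
      exact ((continuousOn_kernelDeriv ha.le).mono (prod_mono hsub subset_rfl))
        |>.aestronglyMeasurable (measurableSet_Ioc.prod measurableSet_Ioi)
    · rw [Measure.prod_restrict]
      filter_upwards [ae_restrict_mem (measurableSet_Ioc.prod measurableSet_Ioi)]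
        with ⟨u, v⟩ ⟨hu, hv⟩
      simpa using norm_kernelDeriv_le hr.le (hsub hu) hv
  calc ∫ v in Ioi a, kernel r q x v
      = ∫ v in Ioi a, ∫ u in Ioc 0 x, kernelDeriv r q u v := by
        refine setIntegral_congr_fun measurableSet_Ioi fun v hv => ?_
        rw [kernel_eq_integral_kernelDeriv hx (hxa.trans_lt hv),
          intervalIntegral.integral_of_le hx]
    _ = ∫ u in 0..x, ∫ v in Ioi a, kernelDeriv r q u v := by
        rw [intervalIntegral.integral_of_le hx, integral_integral_swap hint]

end

section Primitive
variable {E : Type*} [NormedAddCommGroup E] [NormedSpace ℝ E] [CompleteSpace E]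
  {f : ℝ → E} {a b : ℝ}

theorem ContinuousOn.contDiffOn_integral_Icc (hab : a ≤ b) (hf : ContinuousOn f (Icc a b)) :
    ContDiffOn ℝ 1 (fun x => ∫ t in a..x, f t) (Icc a b) := by
  set g := IccExtend hab ((Icc a b).domRestrict f)
  have hg : Continuous g :=
    continuous_IccExtend_iff.2 (continuousOn_iff_continuous_domRestrict.1 hf)
  have hprim : ContDiff ℝ 1 (fun x => ∫ t in a..x, g t) := by
    rw [contDiff_one_iff_deriv, funext (hg.deriv_integral g a)]
    exact ⟨fun x => (hg.integral_hasStrictDerivAt a x).hasDerivAt.differentiableAt, hg⟩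
  refine hprim.contDiffOn.congr fun x hx => intervalIntegral.integral_congr fun t ht => ?_
  rw [uIcc_of_le hx.1] at ht
  exact (IccExtend_of_mem hab ((Icc a b).domRestrict f) ⟨ht.1, ht.2.trans hx.2⟩).symm

theorem ContinuousOn.hasDerivAt_integral_of_mem_Ioo (hf : ContinuousOn f (Icc a b)) {x : ℝ}
    (hx : x ∈ Ioo a b) : HasDerivAt (fun x => ∫ t in a..x, f t) (f x) x :=
  intervalIntegral.integral_hasDerivAt_right
    ((hf.mono (Icc_subset_Icc_right hx.2.le)).intervalIntegrable_of_Icc hx.1.le)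
    ((hf.mono Ioo_subset_Icc_self).stronglyMeasurableAtFilter isOpen_Ioo x hx)
    (hf.continuousAt (Icc_mem_nhds hx.1 hx.2))

end Primitive

theorem stmt6 (s r : ℝ) (hr0 : 0 < r) (hr1 : r < 1 + 2 * s)
    (G : ℝ → ℝ) (hG0 : G 0 = 0)
    (hG : ∀ x : ℝ, 0 < x → x ≤ 1 / 2 →
      G x = x ^ (r - 2 * s) *
        ∫ t in Set.Ioi (1 / (2 * x)), ((t + 1) ^ r - (t - 1) ^ r) / t ^ (1 + 2 * s)) :
    ContDiffOn ℝ 1 G (Set.Icc 0 (1 / 2)) ∧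
    ∃ l : ℝ, Filter.Tendsto (deriv G) (nhdsWithin 0 (Set.Ioi 0)) (nhds l) := by
  set H := fun u => ∫ v in Ioi (1 / 2 : ℝ), kernelDeriv r (1 + 2 * s) u v
  have hH : ContinuousOn H (Icc 0 (1 / 2)) :=
    continuousOn_integral_kernelDeriv one_half_pos hr0 hr1
  have hGH : EqOn G (fun x => ∫ u in 0..x, H u) (Icc 0 (1 / 2)) := by
    rintro x ⟨hx0, hx1⟩
    rcases hx0.eq_or_lt with rfl | hx0
    · simp [hG0]
    · rw [hG x hx0 hx1, ← div_div, show r - 2 * s = r + 1 - (1 + 2 * s) by ring,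
        rpow_mul_integral_Ioi_div_eq_integral_kernel hx0 hx1,
        integral_kernel_eq_integral_integral_kernelDeriv one_half_pos hr0 hr1 hx0.le hx1]
  refine ⟨(hH.contDiffOn_integral_Icc one_half_pos.le).congr hGH, H 0, ?_⟩
  have hderiv : deriv G =ᶠ[nhdsWithin 0 (Ioi 0)] H := by
    filter_upwards [Ioo_mem_nhdsGT one_half_pos] with x hx
    rw [(eventuallyEq_of_mem (Ioo_mem_nhds hx.1 hx.2) (hGH.mono Ioo_subset_Icc_self)).deriv_eq,
      (hH.hasDerivAt_integral_of_mem_Ioo hx).deriv]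
  refine Tendsto.congr' hderiv.symm ?_
  have := hH.continuousWithinAt (left_mem_Icc.2 one_half_pos.le)
  rw [ContinuousWithinAt, nhdsWithin_Icc_eq_nhdsGE one_half_pos] at this
  exact this.mono_left (nhdsWithin_mono _ Ioi_subset_Ici_self)
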